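/- Let n ∈ ℕ and q ∈ ℂ with q ≠ 0. Let D be the diagonal (n+1)×(n+1) matrix with diagonal entries q^{r(r-1)/2}, r = 0,…,n, so that D^♯ is the diagonal matrix with entries q^{(n-r)(n-r-1)/2}. Set Φ = σ₁(q,n)·D^♯ and Ψ = D·σ₂(q,n). Then Φ·Ψ·Φ = Ψ·Φ·Ψ = q^{n(n-1)/2}·S(q)·D^♯. -/

import Mathlib

/-! Write `t r = r.choose 2`. Entrywise `Φ k m = C(n-k, n-m) q^t(n-m)` and
`Ψ k m = (-1)^(k+m) q^t(m) C(k,m)` (the `q⁻¹`-binomials in `σ₂` turn into `q`-binomials),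
and the right-hand side is the antidiagonal matrix `J` with entries `(-1)^k q^t(n)`.
A `q`-Vandermonde identity evaluates `ΨΦ`, and `q`-binomial inversion then gives `ΨΦΨ = J`.
Since `JΨ = ΦJ`, we get `ΦΨΦ · Ψ = ΦJ = JΨ`, and `Ψ` cancels because it divides the invertible
matrix `J`. Both sum identities are inductions on a summation by parts against the Pascal
recursion. -/

/-- The Gaussian ($q$-)binomial coefficient `C(n,k)_q`, defined by the recursion
`C(n+1,k)_q = C(n,k-1)_q + q^k * C(n,k)_q`, with `C(n,0)_q = C(n,n)_q = 1` and
`C(n,k)_q = 0` for `k > n`. -/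
noncomputable def qBinom (q : ℂ) : ℕ → ℕ → ℂ
  | 0, 0 => 1
  | 0, _ + 1 => 0
  | _ + 1, 0 => 1
  | n + 1, k + 1 => qBinom q n k + q ^ (k + 1) * qBinom q n (k + 1)

/-- The matrix `σ₁(q,n)` with entries `σ₁(q,n)_{km} = C(n-k, n-m)_q`. -/
noncomputable def sigma1 (q : ℂ) (n : ℕ) : Matrix (Fin (n + 1)) (Fin (n + 1)) ℂ :=
  fun k m => qBinom q (n - k.val) (n - m.val)

/-- The matrix `σ₂(q,n)` with entries
`σ₂(q,n)_{km} = (-1)^{k+m} q^{-(k-m)(k-m-1)/2} C(k,m)_{q⁻¹}` for `m ≤ k`, and `0` otherwise. -/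
noncomputable def sigma2 (q : ℂ) (n : ℕ) : Matrix (Fin (n + 1)) (Fin (n + 1)) ℂ :=
  fun k m =>
    if m.val ≤ k.val then
      (-1 : ℂ) ^ (k.val + m.val) *
        q ^ (-(((k.val - m.val) * (k.val - m.val - 1) / 2 : ℕ) : ℤ)) *
        qBinom q⁻¹ k.val m.val
    else 0

/-- The matrix `S(q)` with entries `S(q)_{km} = (-1)^k q^{-k(k-1)/2}` when `k+m = n`,
and `0` otherwise. -/
noncomputable def Smat (q : ℂ) (n : ℕ) : Matrix (Fin (n + 1)) (Fin (n + 1)) ℂ :=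
  fun k m =>
    if k.val + m.val = n then (-1 : ℂ) ^ k.val * q ^ (-((k.val * (k.val - 1) / 2 : ℕ) : ℤ))
    else 0

/-- `A^♯`, the matrix with entries `(A^♯)_{ij} = A_{n-i, n-j}`. -/
noncomputable def msharp {n : ℕ} (A : Matrix (Fin (n + 1)) (Fin (n + 1)) ℂ) :
    Matrix (Fin (n + 1)) (Fin (n + 1)) ℂ :=
  fun i j => A i.rev j.rev

open Finset Matrix

theorem Nat.succ_choose_two (n : ℕ) : (n + 1).choose 2 = n.choose 2 + n := by
  rw [Nat.choose_succ_succ, Nat.choose_one_right, add_comm]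

theorem Nat.add_choose_two (a b : ℕ) : (a + b).choose 2 = a.choose 2 + b.choose 2 + a * b := by
  induction b with
  | zero => simp
  | succ b ih => rw [← add_assoc, Nat.succ_choose_two, ih, Nat.succ_choose_two]; ring

section GaussianBinomial

variable (q : ℂ)

@[simp] lemma qBinom_zero_right (n : ℕ) : qBinom q n 0 = 1 := by cases n <;> rfl

lemma qBinom_succ_succ (n k : ℕ) :
    qBinom q (n + 1) (k + 1) = qBinom q n k + q ^ (k + 1) * qBinom q n (k + 1) := rfl

lemma qBinom_eq_zero_of_lt {n k : ℕ} (h : n < k) : qBinom q n k = 0 := by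
  induction n generalizing k with
  | zero => obtain ⟨k, rfl⟩ := Nat.exists_eq_add_of_lt h; rfl
  | succ n ih =>
    obtain ⟨k, rfl⟩ : ∃ j, k = j + 1 := ⟨k - 1, by omega⟩
    rw [qBinom_succ_succ, ih (by omega), ih (by omega), mul_zero, add_zero]

@[simp] lemma qBinom_self (n : ℕ) : qBinom q n n = 1 := by
  induction n with
  | zero => rfl
  | succ n ih =>
    rw [qBinom_succ_succ, ih, qBinom_eq_zero_of_lt q n.lt_succ_self, mul_zero, add_zero]

lemma qBinom_succ_succ' (n k : ℕ) :
    qBinom q (n + 1) (k + 1) = q ^ (n - k) * qBinom q n k + qBinom q n (k + 1) := by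
  induction n generalizing k with
  | zero => cases k <;> simp [qBinom_eq_zero_of_lt]
  | succ n ih =>
    cases k with
    | zero =>
      have e₁ := qBinom_succ_succ q (n + 1) 0
      have e₂ := ih 0
      have e₃ := qBinom_succ_succ q n 0
      simp only [qBinom_zero_right, Nat.sub_zero, zero_add, pow_one, mul_one] at e₁ e₂ e₃ ⊢
      linear_combination e₁ + q * e₂ - e₃
    | succ k =>
      rcases lt_trichotomy k n with hk | rfl | hk
      · have hpow : q ^ (k + 1 + 1) * q ^ (n - (k + 1)) = q ^ (n - k) * q ^ (k + 1) := by
          rw [← pow_add, ← pow_add]; congr 1; omega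
        rw [show n + 1 - (k + 1) = n - k by omega]
        linear_combination qBinom_succ_succ q (n + 1) (k + 1) + ih k
          + q ^ (k + 1 + 1) * ih (k + 1) - q ^ (n - k) * qBinom_succ_succ q n k
          + qBinom q n (k + 1) * hpow - qBinom_succ_succ q n (k + 1)
      · simp [qBinom_eq_zero_of_lt q (show k + 1 < k + 1 + 1 by omega)]
      · simp [qBinom_eq_zero_of_lt q (show n + 1 < k + 1 by omega),
          qBinom_eq_zero_of_lt q (show n + 1 < k + 1 + 1 by omega),
          qBinom_eq_zero_of_lt q (show n + 1 + 1 < k + 1 + 1 by omega)]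

lemma qBinom_symm {n k : ℕ} (h : k ≤ n) : qBinom q n (n - k) = qBinom q n k := by
  induction n generalizing k with
  | zero => rw [Nat.le_zero.1 h]
  | succ n ih =>
    rcases k with _ | k
    · simp
    rcases h.eq_or_lt with hk | hk
    · obtain rfl : k = n := by omega
      simp
    obtain ⟨j, hj⟩ : ∃ j, n - k = j + 1 := ⟨n - k - 1, by omega⟩
    rw [Nat.add_sub_add_right, hj, qBinom_succ_succ', ← hj, ih (k := k) (by omega),
      qBinom_succ_succ, show n - j = k + 1 by omega, show j = n - (k + 1) by omega,
      ih (k := k + 1) (by omega)]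
    ring

lemma pow_mul_qBinom_inv (hq : q ≠ 0) (n k : ℕ) :
    q ^ (k * (n - k)) * qBinom q⁻¹ n k = qBinom q n k := by
  induction n generalizing k with
  | zero => cases k <;> simp [qBinom_eq_zero_of_lt]
  | succ n ih =>
    rcases k with _ | k
    · simp
    have h₁ : q ^ ((k + 1) * (n + 1 - (k + 1))) = q ^ (n - k) * q ^ (k * (n - k)) := by
      rw [← pow_add, Nat.add_sub_add_right]; congr 1; ring
    have h₂ : q ^ ((k + 1) * (n + 1 - (k + 1))) * q⁻¹ ^ (k + 1) * qBinom q⁻¹ n (k + 1)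
        = qBinom q n (k + 1) := by
      rcases lt_or_ge k n with hk | hk
      · rw [← ih (k + 1), Nat.add_sub_add_right, inv_pow,
          show (k + 1) * (n - k) = (k + 1) * (n - (k + 1)) + (k + 1) by
            rw [← Nat.mul_succ]; congr 1; omega, pow_add]
        field_simp
      · simp [qBinom_eq_zero_of_lt _ (show n < k + 1 by omega)]
    rw [qBinom_succ_succ, qBinom_succ_succ', ← ih k]
    linear_combination qBinom q⁻¹ n k * h₁ + h₂

lemma pow_mul_qBinom_congr {a b n k : ℕ} (h : k ≤ n → a = b) :
    q ^ a * qBinom q n k = q ^ b * qBinom q n k := by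
  rcases le_or_gt k n with hk | hk
  · rw [h hk]
  · simp [qBinom_eq_zero_of_lt q hk]

-- Summation by parts against the Pascal recursion `qBinom_succ_succ`.
lemma sum_range_qBinom_succ_mul (K : ℕ) (f : ℕ → ℂ) :
    ∑ b ∈ range (K + 2), (-1) ^ b * q ^ b.choose 2 * qBinom q (K + 1) b * f b
      = ∑ b ∈ range (K + 1),
          (-1) ^ b * q ^ (b + 1).choose 2 * qBinom q K b * (f b - f (b + 1)) := by
  set g : ℕ → ℂ := fun b => (-1) ^ b * q ^ (b + 1).choose 2 * qBinom q K b * f b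
  have hterm : ∀ b, (-1) ^ (b + 1) * q ^ (b + 1).choose 2 * qBinom q (K + 1) (b + 1) * f (b + 1)
      = g (b + 1) - (-1) ^ b * q ^ (b + 1).choose 2 * qBinom q K b * f (b + 1) := by
    intro b
    simp only [g, qBinom_succ_succ, Nat.choose_succ_succ (b + 1), Nat.choose_one_right]
    ring
  have hg_top : g (K + 1) = 0 := by simp [g, qBinom_eq_zero_of_lt q K.lt_succ_self]
  have hg_zero : g 0 = f 0 := by simp [g]
  simp only [mul_sub, Finset.sum_sub_distrib]
  rw [Finset.sum_range_succ', Finset.sum_congr rfl fun b _ => hterm b, Finset.sum_sub_distrib,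
    Finset.sum_range_succ, hg_top, Finset.sum_range_succ' g, hg_zero]
  simp only [pow_zero, Nat.choose_zero_succ, qBinom_zero_right, one_mul, add_zero]
  ring

-- Summation by parts against the Pascal recursion `qBinom_succ_succ'`.
lemma sum_range_qBinom_succ_mul' (K : ℕ) (f : ℕ → ℂ) :
    ∑ b ∈ range (K + 2), (-1) ^ b * q ^ (K + 1 - b).choose 2 * qBinom q (K + 1) b * f b
      = ∑ b ∈ range (K + 1),
          (-1) ^ b * q ^ (K + 1 - b).choose 2 * qBinom q K b * (f b - f (b + 1)) := by
  set g : ℕ → ℂ := fun b => (-1) ^ b * q ^ (K + 1 - b).choose 2 * qBinom q K b * f b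
  have hterm : ∀ b ∈ range (K + 1),
      (-1) ^ (b + 1) * q ^ (K + 1 - (b + 1)).choose 2 * qBinom q (K + 1) (b + 1) * f (b + 1)
        = g (b + 1) - (-1) ^ b * q ^ (K + 1 - b).choose 2 * qBinom q K b * f (b + 1) := by
    intro b hb
    rw [Finset.mem_range] at hb
    simp only [g, qBinom_succ_succ', Nat.add_sub_add_right,
      show K + 1 - b = K - b + 1 by omega, Nat.choose_succ_succ (K - b), Nat.choose_one_right]
    ring
  have hg_top : g (K + 1) = 0 := by simp [g, qBinom_eq_zero_of_lt q K.lt_succ_self]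
  simp only [mul_sub, Finset.sum_sub_distrib]
  rw [Finset.sum_range_succ', Finset.sum_congr rfl hterm, Finset.sum_sub_distrib,
    Finset.sum_range_succ, hg_top, Finset.sum_range_succ' g]
  simp only [g, pow_zero, Nat.sub_zero, qBinom_zero_right, one_mul, mul_one, add_zero]
  ring

lemma sum_range_qBinom_mul_qBinom_sub {K n M : ℕ} (hK : K ≤ n) (hM : M ≤ n) :
    ∑ b ∈ range (K + 1), (-1) ^ b * q ^ b.choose 2 * qBinom q K b * qBinom q (n - b) M
      = q ^ (K * (n - M)) * qBinom q (n - K) (n - M) := by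
  induction K generalizing n M with
  | zero => simp [qBinom_symm q hM]
  | succ K ih =>
    obtain ⟨n, rfl⟩ : ∃ m, n = m + 1 := ⟨n - 1, by omega⟩
    rw [sum_range_qBinom_succ_mul]
    rcases M with _ | M
    · simp [qBinom_eq_zero_of_lt q (show n - K < n + 1 by omega)]
    have hterm : ∀ b ∈ range (K + 1),
        (-1) ^ b * q ^ (b + 1).choose 2 * qBinom q K b
            * (qBinom q (n + 1 - b) (M + 1) - qBinom q (n + 1 - (b + 1)) (M + 1))
          = q ^ (n - M) * ((-1) ^ b * q ^ b.choose 2 * qBinom q K b * qBinom q (n - b) M) := by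
      intro b hb
      rw [Finset.mem_range] at hb
      have hexp := pow_mul_qBinom_congr q (a := (b + 1).choose 2 + (n - b - M))
        (b := n - M + b.choose 2) (n := n - b) (k := M) fun h => by
          rw [Nat.succ_choose_two]; omega
      rw [pow_add, pow_add] at hexp
      rw [show n + 1 - b = n - b + 1 by omega, Nat.add_sub_add_right, qBinom_succ_succ']
      linear_combination (-1) ^ b * qBinom q K b * hexp
    rw [Finset.sum_congr rfl hterm, ← Finset.mul_sum, ih (by omega) (by omega), ← mul_assoc,
      ← pow_add, Nat.add_sub_add_right, Nat.add_sub_add_right, add_one_mul, add_comm]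

lemma sum_range_qBinom_mul_qBinom_eq_ite (k u : ℕ) :
    ∑ b ∈ range (k + 1), (-1) ^ b * q ^ (k - b).choose 2 * qBinom q k b * qBinom q b u
      = if k = u then (-1) ^ k else 0 := by
  induction k generalizing u with
  | zero => cases u <;> simp [qBinom_eq_zero_of_lt]
  | succ k ih =>
    rw [sum_range_qBinom_succ_mul' q k fun b => qBinom q b u]
    rcases u with _ | u
    · simp
    have hterm : ∀ b ∈ range (k + 1),
        (-1) ^ b * q ^ (k + 1 - b).choose 2 * qBinom q k b
            * (qBinom q b (u + 1) - qBinom q (b + 1) (u + 1))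
          = -q ^ (k - u) * ((-1) ^ b * q ^ (k - b).choose 2 * qBinom q k b * qBinom q b u) := by
      intro b hb
      rw [Finset.mem_range] at hb
      have hexp := pow_mul_qBinom_congr q (a := (k + 1 - b).choose 2 + (b - u))
        (b := k - u + (k - b).choose 2) (n := b) (k := u) fun h => by
          rw [show k + 1 - b = k - b + 1 by omega, Nat.succ_choose_two]; omega
      rw [pow_add, pow_add] at hexp
      rw [qBinom_succ_succ']
      linear_combination -(-1) ^ b * qBinom q k b * hexp
    rw [Finset.sum_congr rfl hterm, ← Finset.mul_sum, ih]
    split_ifs with h₁ h₂ h₂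
    · subst h₁; simp [pow_succ]
    · omega
    · omega
    · simp

end GaussianBinomial

theorem mul_mul_eq_of_semiconjBy {M : Type*} [Monoid M] [IsDedekindFiniteMonoid M] {a b c : M}
    (hc : IsUnit c) (h : b * a * b = c) (hsc : SemiconjBy c b a) : a * b * a = c := by
  have hb : IsUnit b := isUnit_of_mul_isUnit_right (x := b * a) (h ▸ hc)
  refine hb.mul_right_cancel ?_
  calc a * b * a * b = a * (b * a * b) := by simp only [mul_assoc]
    _ = c * b := by rw [h, hsc.eq]

section Antidiagonal

variable {R : Type*} {n : ℕ}

def antidiag [Zero R] (a : Fin n → R) : Matrix (Fin n) (Fin n) R :=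
  of fun i j => if j = i.rev then a i else 0

lemma antidiag_mul_apply [NonUnitalNonAssocSemiring R] (a : Fin n → R)
    (B : Matrix (Fin n) (Fin n) R) (i j : Fin n) : (antidiag a * B) i j = a i * B i.rev j := by
  simp [antidiag, mul_apply, ite_mul]

lemma mul_antidiag_apply [NonUnitalNonAssocSemiring R] (a : Fin n → R)
    (B : Matrix (Fin n) (Fin n) R) (i j : Fin n) : (B * antidiag a) i j = B i j.rev * a j.rev := by
  simp only [antidiag, mul_apply, of_apply, mul_ite, mul_zero]
  simp_rw [eq_comm (a := j), Fin.rev_eq_iff]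
  simp

lemma antidiag_mul_antidiag [NonUnitalNonAssocSemiring R] (a b : Fin n → R) :
    antidiag a * antidiag b = diagonal fun i => a i * b i.rev := by
  ext i j
  rw [antidiag_mul_apply, diagonal_apply]
  simp [antidiag, Fin.rev_rev, eq_comm]

lemma isUnit_antidiag [CommRing R] {a : Fin n → R} (ha : ∀ i, IsUnit (a i)) :
    IsUnit (antidiag a) := by
  refine isUnit_of_mul_isUnit_left (y := antidiag a) ?_
  rw [antidiag_mul_antidiag, isUnit_diagonal, Pi.isUnit_iff]
  exact fun i => (ha i).mul (ha i.rev)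

end Antidiagonal

lemma msharp_diagonal {n : ℕ} (d : Fin (n + 1) → ℂ) :
    msharp (diagonal d) = diagonal fun i => d i.rev := by
  ext i j
  simp [msharp, diagonal_apply]

lemma Fin.eq_rev_iff_val_add_val_eq {n : ℕ} {i j : Fin (n + 1)} :
    j = i.rev ↔ i.val + j.val = n := by
  rw [Fin.ext_iff, Fin.val_rev]; omega

lemma Fin.sum_univ_eq_sum_range_of_le {M : Type*} [AddCommMonoid M] {n k : ℕ} (hk : k ≤ n)
    (f : ℕ → M) (hf : ∀ a, k < a → f a = 0) :
    ∑ a : Fin (n + 1), f a = ∑ a ∈ range (k + 1), f a := by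
  rw [Fin.sum_univ_eq_sum_range f (n + 1)]
  refine (Finset.sum_subset (range_subset_range.2 (by omega)) fun a _ ha => hf a ?_).symm
  simpa using ha

section QFerrand

variable (q : ℂ) (n : ℕ)

def qDiag : Matrix (Fin (n + 1)) (Fin (n + 1)) ℂ :=
  diagonal fun r : Fin (n + 1) => q ^ (r.val * (r.val - 1) / 2)

noncomputable def qPhi : Matrix (Fin (n + 1)) (Fin (n + 1)) ℂ := sigma1 q n * msharp (qDiag q n)

noncomputable def qPsi : Matrix (Fin (n + 1)) (Fin (n + 1)) ℂ := qDiag q n * sigma2 q n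

lemma qPhi_apply (k m : Fin (n + 1)) :
    qPhi q n k m = qBinom q (n - k) (n - m) * q ^ (n - m).choose 2 := by
  simp [qPhi, qDiag, msharp_diagonal, mul_diagonal, sigma1, Nat.choose_two_right, Fin.val_rev]

variable {q}

lemma qPsi_apply (hq : q ≠ 0) (k m : Fin (n + 1)) :
    qPsi q n k m = (-1) ^ (k.val + m.val) * q ^ m.val.choose 2 * qBinom q k m := by
  rw [qPsi, qDiag, diagonal_mul, sigma2]
  split_ifs with hmk
  · have hk : k.val.choose 2 = (k - m : ℕ).choose 2 + m.val.choose 2 + m * (k - m) := by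
      rw [mul_comm, ← Nat.add_choose_two, Nat.sub_add_cancel hmk]
    rw [← Nat.choose_two_right, ← Nat.choose_two_right, hk, pow_add, pow_add, _root_.zpow_neg,
      zpow_natCast, ← pow_mul_qBinom_inv q hq]
    field_simp
  · rw [qBinom_eq_zero_of_lt q (by omega)]; ring

lemma qPsi_mul_qPhi_apply (hq : q ≠ 0) (k m : Fin (n + 1)) :
    (qPsi q n * qPhi q n) k m
      = (-1) ^ k.val * q ^ ((n - m).choose 2 + k * m) * qBinom q (n - k) m := by
  calc (qPsi q n * qPhi q n) k m
      = ∑ a : Fin (n + 1), (-1) ^ k.val * q ^ (n - m).choose 2 *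
          ((-1) ^ a.val * q ^ a.val.choose 2 * qBinom q k a * qBinom q (n - a) (n - m)) := by
        simp only [mul_apply, qPsi_apply n hq, qPhi_apply]
        exact Finset.sum_congr rfl fun a _ => by ring
    _ = (-1) ^ k.val * q ^ (n - m).choose 2 *
          ∑ a ∈ range (k + 1),
            (-1) ^ a * q ^ a.choose 2 * qBinom q k a * qBinom q (n - a) (n - m) := by
        rw [← Finset.mul_sum, Fin.sum_univ_eq_sum_range_of_le k.is_le
          (fun a => (-1) ^ a * q ^ a.choose 2 * qBinom q k a * qBinom q (n - a) (n - m))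
          fun a ha => by simp [qBinom_eq_zero_of_lt q ha]]
    _ = _ := by
        rw [sum_range_qBinom_mul_qBinom_sub q k.is_le (Nat.sub_le n m), Nat.sub_sub_self m.is_le,
          pow_add]
        ring

lemma qPsi_mul_qPhi_mul_qPsi (hq : q ≠ 0) :
    qPsi q n * qPhi q n * qPsi q n = antidiag fun k => (-1) ^ k.val * q ^ n.choose 2 := by
  ext k m
  have hexp : ∀ a, a ≤ n - k →
      (n - a).choose 2 + k * a = (n - k - a).choose 2 + (k.val.choose 2 + k * (n - k)) := by
    intro a ha
    set x := n - k - a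
    rw [show n - a = x + k by omega, show n - k = x + a by omega, Nat.add_choose_two]
    ring
  calc (qPsi q n * qPhi q n * qPsi q n) k m
      = ∑ a : Fin (n + 1), (-1) ^ (k.val + m.val) * q ^ m.val.choose 2 *
          ((-1) ^ a.val * (q ^ ((n - a).choose 2 + k * a) * qBinom q (n - k) a)
            * qBinom q a m) := by
        rw [mul_apply]
        simp only [qPsi_mul_qPhi_apply n hq, qPsi_apply n hq]
        exact Finset.sum_congr rfl fun a _ => by ring
    _ = (-1) ^ (k.val + m.val) * q ^ m.val.choose 2 * (q ^ (k.val.choose 2 + k * (n - k)) *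
          ∑ a ∈ range (n - k + 1),
            (-1) ^ a * q ^ (n - k - a).choose 2 * qBinom q (n - k) a * qBinom q a m) := by
        rw [← Finset.mul_sum, Fin.sum_univ_eq_sum_range_of_le (Nat.sub_le n k)
          (fun a =>
            (-1) ^ a * (q ^ ((n - a).choose 2 + k * a) * qBinom q (n - k) a) * qBinom q a m)
          fun a ha => by simp [qBinom_eq_zero_of_lt q ha]]
        simp only [Finset.mul_sum]
        refine Finset.sum_congr rfl fun a _ => ?_
        rw [pow_mul_qBinom_congr q (hexp a), pow_add]
        ring
    _ = antidiag (fun k => (-1) ^ k.val * q ^ n.choose 2) k m := by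
        rw [sum_range_qBinom_mul_qBinom_eq_ite, antidiag, of_apply]
        split_ifs with h₁ h₂ h₂ <;> rw [Fin.eq_rev_iff_val_add_val_eq] at h₂
        · have hn : n.choose 2 = m.val.choose 2 + k.val.choose 2 + k * (n - k) := by
            rw [h₁, mul_comm, ← Nat.add_choose_two, add_comm, h₂]
          have hsq : (-1 : ℂ) ^ m.val * (-1) ^ m.val = 1 := by rw [← mul_pow]; norm_num
          rw [h₁, hn, h₁, pow_add, pow_add, pow_add]
          linear_combination
            (-1) ^ k.val * q ^ m.val.choose 2 * q ^ k.val.choose 2 * q ^ (k.val * m.val) * hsq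
        · omega
        · omega
        · ring

lemma semiconjBy_antidiag_qPsi_qPhi (hq : q ≠ 0) :
    SemiconjBy (antidiag fun k => (-1) ^ k.val * q ^ n.choose 2) (qPsi q n) (qPhi q n) := by
  ext k m
  rw [antidiag_mul_apply, mul_antidiag_apply, qPsi_apply n hq, qPhi_apply]
  simp only [Fin.val_rev, show n + 1 - (m + 1) = n - m by omega,
    show n + 1 - (k + 1) = n - k by omega, Nat.sub_sub_self m.is_le]
  have hsign : (-1 : ℂ) ^ k.val * (-1) ^ (n - k + m) = (-1) ^ (n - m) := by
    rw [← pow_add, show k.val + (n - k + m) = n - m + 2 * m by omega, pow_add, pow_mul,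
      neg_one_sq, one_pow, mul_one]
  linear_combination q ^ n.choose 2 * q ^ m.val.choose 2 * qBinom q (n - k) m * hsign

lemma smul_Smat_mul_msharp_qDiag (hq : q ≠ 0) :
    q ^ (n * (n - 1) / 2) • (Smat q n * msharp (qDiag q n))
      = antidiag fun k => (-1) ^ k.val * q ^ n.choose 2 := by
  ext k m
  rw [qDiag, msharp_diagonal, Matrix.smul_apply, mul_diagonal, antidiag, of_apply, Smat,
    ← Nat.choose_two_right, smul_eq_mul]
  split_ifs with h₁ h₂ h₂ <;> rw [Fin.eq_rev_iff_val_add_val_eq] at h₂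
  · rw [Fin.val_rev, show n + 1 - (m + 1) = k by omega, ← Nat.choose_two_right, _root_.zpow_neg,
      zpow_natCast]
    field_simp
  · omega
  · omega
  · simp

end QFerrand

/-- With `D = diag(q^{r(r-1)/2})`, `Φ = σ₁(q,n) D^♯` and
`Ψ = D σ₂(q,n)` satisfy the braid relation
`Φ Ψ Φ = Ψ Φ Ψ = q^{n(n-1)/2} S(q) D^♯`. -/
theorem qFerrand_braid_relation (n : ℕ) (q : ℂ) (hq : q ≠ 0)
    (D Φ Ψ : Matrix (Fin (n + 1)) (Fin (n + 1)) ℂ)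
    (hD : D = Matrix.diagonal (fun r : Fin (n + 1) => q ^ (r.val * (r.val - 1) / 2)))
    (hΦ : Φ = sigma1 q n * msharp D)
    (hΨ : Ψ = D * sigma2 q n) :
    Φ * Ψ * Φ = Ψ * Φ * Ψ ∧
      Φ * Ψ * Φ = q ^ (n * (n - 1) / 2) • (Smat q n * msharp D) := by
  obtain rfl : D = qDiag q n := hD
  obtain rfl : Φ = qPhi q n := hΦ
  obtain rfl : Ψ = qPsi q n := hΨ
  have hΨΦΨ := qPsi_mul_qPhi_mul_qPsi n hq
  have hJ : IsUnit (antidiag fun k : Fin (n + 1) => (-1) ^ k.val * q ^ n.choose 2) :=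
    isUnit_antidiag fun k => isUnit_iff_ne_zero.2 (by simp [hq])
  have hΦΨΦ := mul_mul_eq_of_semiconjBy hJ hΨΦΨ (semiconjBy_antidiag_qPsi_qPhi n hq)
  rw [smul_Smat_mul_msharp_qDiag n hq]
  exact ⟨hΦΨΦ.trans hΨΦΨ.symm, hΦΨΦ⟩
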